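/- arXiv:1708.00125 — 3 statements merged into one kernel-verified Lean document; each statement's English description precedes it below -/
import Mathlib

section
/- The 5-block graph G formed from vertex-disjoint graphs H_1,...,H_5 of clique number at most k by adding all edges between pairs of blocks E(1,3), E(1,5), E(2,4), E(2,5), E(3,4) is K_{2k+1}-free. -/
open SimpleGraph

/-- `Copies G F S`: `G` contains a copy of `F` all of whose vertices lie in `S`. -/
def Copies {α β : Type*} (G : SimpleGraph α) (F : SimpleGraph β) (S : Set α) : Prop :=
  ∃ f : β ↪ α, (∀ a b, F.Adj a b → G.Adj (f a) (f b)) ∧ ∀ a, f a ∈ S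

/-- `G` vertex-arrows the family `F` of graphs. -/
def VArrows {α : Type*} (G : SimpleGraph α) {r : ℕ} {β : Fin r → Type*}
    (F : ∀ i, SimpleGraph (β i)) : Prop :=
  ∀ C : α → Fin r, ∃ i, Copies G (F i) {v | C v = i}

/-- `G` vertex-arrows `(F1, F2)`. -/
def VArrows2 {α β γ : Type*} (G : SimpleGraph α) (F1 : SimpleGraph β) (F2 : SimpleGraph γ) :
    Prop :=
  ∀ C : α → Bool, Copies G F1 {v | C v = true} ∨ Copies G F2 {v | C v = false}

/-- `G` edge-arrows `(F1, F2)`: every red subgraph `R ≤ G` yields a red `F1` or a blue `F2`. -/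
def EArrows2 {α β γ : Type*} (G : SimpleGraph α) (F1 : SimpleGraph β) (F2 : SimpleGraph γ) :
    Prop :=
  ∀ R : SimpleGraph α, R ≤ G → Copies R F1 Set.univ ∨ Copies (G \ R) F2 Set.univ

/-- Vertex Folkman number for a family of target graphs. -/
noncomputable def Fv {r : ℕ} {β : Fin r → Type*} (F : ∀ i, SimpleGraph (β i)) (k : ℕ) : ℕ :=
  sInf {n | ∃ G : SimpleGraph (Fin n), G.CliqueFree k ∧ VArrows G F}

/-- Two-color vertex Folkman number. -/
noncomputable def Fv2 {β γ : Type*} (F1 : SimpleGraph β) (F2 : SimpleGraph γ) (k : ℕ) : ℕ :=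
  sInf {n | ∃ G : SimpleGraph (Fin n), G.CliqueFree k ∧ VArrows2 G F1 F2}

/-- Two-color edge Folkman number. -/
noncomputable def Fe2 {β γ : Type*} (F1 : SimpleGraph β) (F2 : SimpleGraph γ) (k : ℕ) : ℕ :=
  sInf {n | ∃ G : SimpleGraph (Fin n), G.CliqueFree k ∧ EArrows2 G F1 F2}

/-- Lexicographic product `G[H]`. -/
def lexProd {α β : Type*} (G : SimpleGraph α) (H : SimpleGraph β) : SimpleGraph (α × β) where
  Adj x y := G.Adj x.1 y.1 ∨ (x.1 = y.1 ∧ H.Adj x.2 y.2)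
  symm := by constructor; rintro x y (h | ⟨e, h⟩); exacts [Or.inl h.symm, Or.inr ⟨e.symm, h.symm⟩]
  loopless := by constructor; rintro x (h | ⟨_, h⟩); exacts [G.loopless.irrefl _ h, H.loopless.irrefl _ h]

/-- Complete graph on `k` vertices. -/
def Kc (k : ℕ) : SimpleGraph (Fin k) := completeGraph (Fin k)

/-- `J_k = K_k - e`: complete graph on `k` vertices minus one edge (the one
joining the two distinguished right-hand vertices). -/
def Jgraph (k : ℕ) : SimpleGraph (Fin (k - 2) ⊕ Fin 2) where
  Adj x y := x ≠ y ∧ ¬(x.isRight ∧ y.isRight)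
  symm := ⟨fun x y ⟨h1, h2⟩ => ⟨h1.symm, fun ⟨a, b⟩ => h2 ⟨b, a⟩⟩⟩
  loopless := ⟨fun x h => h.1 rfl⟩

/-- Cycle on `n` vertices. -/
def cycle (n : ℕ) : SimpleGraph (ZMod n) where
  Adj i j := i ≠ j ∧ (i - j = 1 ∨ j - i = 1)
  symm := ⟨fun i j ⟨h1, h2⟩ => ⟨h1.symm, h2.symm⟩⟩
  loopless := ⟨fun i h => h.1 rfl⟩

/-- Join of two graphs: disjoint union plus all cross edges. -/
def graphJoin {α β : Type*} (G : SimpleGraph α) (H : SimpleGraph β) :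
    SimpleGraph (α ⊕ β) where
  Adj x y := (∃ a b, x = .inl a ∧ y = .inl b ∧ G.Adj a b) ∨
             (∃ a b, x = .inr a ∧ y = .inr b ∧ H.Adj a b) ∨
             (x.isLeft ∧ y.isRight) ∨ (x.isRight ∧ y.isLeft)
  symm := by
    constructor
    rintro x y (⟨a, b, rfl, rfl, h⟩ | ⟨a, b, rfl, rfl, h⟩ | ⟨h1, h2⟩ | ⟨h1, h2⟩)
    · exact Or.inl ⟨b, a, rfl, rfl, h.symm⟩
    · exact Or.inr (Or.inl ⟨b, a, rfl, rfl, h.symm⟩)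
    · exact Or.inr (Or.inr (Or.inr ⟨h2, h1⟩))
    · exact Or.inr (Or.inr (Or.inl ⟨h2, h1⟩))
  loopless := by
    constructor
    rintro x (⟨a, b, rfl, h, h'⟩ | ⟨a, b, rfl, h, h'⟩ | ⟨h1, h2⟩ | ⟨h1, h2⟩)
    · cases h; exact G.loopless.irrefl _ h'
    · cases h; exact H.loopless.irrefl _ h'
    · cases x <;> simp_all
    · cases x <;> simp_all

/-- Clique number: the largest size of a clique. -/
noncomputable def cliqueNum' {α : Type*} (G : SimpleGraph α) : ℕ :=
  sSup {n | ∃ s : Finset α, G.IsNClique n s}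


/-- The block pairs `(1,3),(1,5),(2,4),(2,5),(3,4)` (1-indexed), symmetrized. -/
def blockAdj (i j : Fin 5) : Prop :=
  (i.val + 1, j.val + 1) ∈
    [(1,3),(3,1),(1,5),(5,1),(2,4),(4,2),(2,5),(5,2),(3,4),(4,3)]

instance : DecidableRel blockAdj := fun i j => by unfold blockAdj; infer_instance

lemma blockAdj_symm : ∀ i j : Fin 5, blockAdj i j → blockAdj j i := by decide

lemma blockAdj_irrefl : ∀ i : Fin 5, ¬ blockAdj i i := by decide

/-- The 5-block graph: disjoint copies of `H 1, …, H 5` with complete joins between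
the block pairs `(1,3),(1,5),(2,4),(2,5),(3,4)`. -/
def fiveBlock {V : Fin 5 → Type*} (H : ∀ i, SimpleGraph (V i)) :
    SimpleGraph (Σ i, V i) where
  Adj x y := (∃ i a b, (H i).Adj a b ∧ x = ⟨i, a⟩ ∧ y = ⟨i, b⟩) ∨ blockAdj x.1 y.1
  symm := by
    constructor
    rintro x y (⟨i, a, b, hab, rfl, rfl⟩ | h)
    · exact Or.inl ⟨i, b, a, hab.symm, rfl, rfl⟩
    · exact Or.inr (blockAdj_symm _ _ h)
  loopless := by
    constructor
    rintro ⟨i, v⟩ (⟨j, a, b, hab, h1, h2⟩ | h)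
    · obtain ⟨rfl, h1'⟩ := Sigma.mk.inj_iff.mp h1
      obtain ⟨-, h2'⟩ := Sigma.mk.inj_iff.mp h2
      rw [← eq_of_heq h1', ← eq_of_heq h2'] at hab
      exact (H _).loopless.irrefl _ hab
    · exact blockAdj_irrefl _ h

/-! A clique of the 5-block graph meets each block in a clique of `H i`, so in at most `k`
vertices, and it meets at most two blocks: two vertices in distinct blocks are adjacent only
if their blocks are joined, and the joined pairs form the 5-cycle `1 – 3 – 4 – 2 – 5 – 1`,
which has no triangle. -/

namespace SimpleGraph

variable {α β ι : Type*} {G : SimpleGraph α}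

theorem IsClique.card_le_of_cliqueFree {n : ℕ} (hG : G.CliqueFree (n + 1)) {s : Finset α}
    (hs : G.IsClique s) : s.card ≤ n := by
  by_contra! h
  exact hG.mono h s ⟨hs, rfl⟩

theorem IsClique.card_filter_mem_range_le {H : SimpleGraph β} {f : β → α} {k : ℕ}
    (hf : Function.Injective f) (hadj : ∀ a b, G.Adj (f a) (f b) → H.Adj a b)
    (hH : H.CliqueFree (k + 1)) {s : Finset α} (hs : G.IsClique s)
    [DecidablePred (· ∈ Set.range f)] : (s.filter (· ∈ Set.range f)).card ≤ k := by
  rw [← Finset.card_preimage s f hf.injOn]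
  refine IsClique.card_le_of_cliqueFree hH fun a ha b hb hab => hadj a b ?_
  exact hs (Finset.mem_preimage.mp ha) (Finset.mem_preimage.mp hb) (hf.ne hab)

theorem IsClique.image_of_adj_map {B : SimpleGraph β} {f : α → β}
    (hadj : ∀ x y, G.Adj x y → f x ≠ f y → B.Adj (f x) (f y)) {s : Finset α} (hs : G.IsClique s)
    [DecidableEq β] : B.IsClique (s.image f) := by
  simp only [IsClique, Finset.coe_image]
  rintro _ ⟨x, hx, rfl⟩ _ ⟨y, hy, rfl⟩ hne
  exact hadj x y (hs hx hy fun h => hne (congrArg f h)) hne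

variable {V : ι → Type*}

theorem cliqueFree_mul_add_one_of_sigma {G : SimpleGraph (Σ i, V i)} {B : SimpleGraph ι}
    {H : ∀ i, SimpleGraph (V i)} {m k : ℕ} (hB : B.CliqueFree (m + 1))
    (hH : ∀ i, (H i).CliqueFree (k + 1)) (hin : ∀ i a b, G.Adj ⟨i, a⟩ ⟨i, b⟩ → (H i).Adj a b)
    (hout : ∀ x y, G.Adj x y → x.1 ≠ y.1 → B.Adj x.1 y.1) :
    G.CliqueFree (m * k + 1) := by
  classical
  intro s hs
  have hblocks : (s.image Sigma.fst).card ≤ m :=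
    (hs.isClique.image_of_adj_map hout).card_le_of_cliqueFree hB
  have hfiber : ∀ i ∈ s.image Sigma.fst, (s.filter (·.1 = i)).card ≤ k := fun i _ => by
    simpa [Set.range_sigmaMk] using
      hs.isClique.card_filter_mem_range_le sigma_mk_injective (hin i) (hH i)
  have hcard := (Finset.card_le_mul_card_image s k hfiber).trans (Nat.mul_le_mul_left k hblocks)
  rw [hs.card_eq, mul_comm k m] at hcard
  omega

end SimpleGraph

open SimpleGraph

def blockGraph : SimpleGraph (Fin 5) where
  Adj := blockAdj
  symm := ⟨blockAdj_symm⟩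
  loopless := ⟨blockAdj_irrefl⟩

theorem blockGraph_cliqueFree_three : blockGraph.CliqueFree 3 := by
  intro s hs
  obtain ⟨a, b, c, hab, hac, hbc, -⟩ := is3Clique_iff.mp hs
  exact (by decide : ∀ a b c : Fin 5, blockAdj a b → blockAdj a c → blockAdj b c → False)
    a b c hab hac hbc

section

variable {V : Fin 5 → Type*} (H : ∀ i, SimpleGraph (V i))

theorem fiveBlock_adj_mk_mk {i : Fin 5} {a b : V i} :
    (fiveBlock H).Adj ⟨i, a⟩ ⟨i, b⟩ ↔ (H i).Adj a b := by
  refine ⟨?_, fun h => Or.inl ⟨i, a, b, h, rfl, rfl⟩⟩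
  rintro (⟨_, _, _, h, ha, hb⟩ | h)
  · cases ha
    cases hb
    exact h
  · exact absurd h (blockAdj_irrefl i)

theorem fiveBlock_adj_fst {x y : Σ i, V i} (h : (fiveBlock H).Adj x y) (hne : x.1 ≠ y.1) :
    blockGraph.Adj x.1 y.1 := by
  rcases h with ⟨_, _, _, -, rfl, rfl⟩ | h
  exacts [absurd rfl hne, h]

end

/-- The 5-block graph formed from blocks of clique number at most `k` joined along
the pairs `(1,3),(1,5),(2,4),(2,5),(3,4)` is `K_{2k+1}`-free. -/
theorem fiveBlock_cliqueFree {V : Fin 5 → Type*} (H : ∀ i, SimpleGraph (V i)) (k : ℕ)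
    (hH : ∀ i, (H i).CliqueFree (k + 1)) :
    (fiveBlock H).CliqueFree (2 * k + 1) :=
  cliqueFree_mul_add_one_of_sigma blockGraph_cliqueFree_three hH
    (fun _ _ _ => (fiveBlock_adj_mk_mk H).mp) (fun _ _ => fiveBlock_adj_fst H)
end

section
/- For every t ≥ 1, the lexicographic product C_5[E_{2t-1}] is triangle-free and vertex-arrows (K_{t,t}, K_{t,t}); hence F_v(K_{t,t}, K_{t,t}; K_3) ≤ 10t − 5. -/
open SimpleGraph

/-! In every fiber `{a} × Fin (2t - 1)` of `G[H]` some color occurs at least `t` times. As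
`C₅` is not bipartite, two adjacent fibers share such a majority color, and `t` vertices of that
color in each of them span a monochromatic `K_{t,t}`. Triangle-freeness passes from `C₅` to
`C₅[E_s]` because the projection to `C₅` is injective on cliques. -/

namespace SimpleGraph

theorem CliqueFree.lexProd_bot {α β : Type*} {G : SimpleGraph α} {n : ℕ} (h : G.CliqueFree n) :
    (lexProd G (⊥ : SimpleGraph β)).CliqueFree n := by
  rw [cliqueFree_iff] at h ⊢
  let fst : lexProd G (⊥ : SimpleGraph β) →g G := ⟨Prod.fst, fun hxy => hxy.resolve_right (·.2)⟩
  exact ⟨fun f => h.false ((fst.comp f.toHom).toCopy (Hom.injective_of_top_hom _))⟩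

end SimpleGraph

instance (n : ℕ) : DecidableRel (cycle n).Adj := fun _ _ => by unfold cycle; infer_instance

theorem cycle_five_cliqueFree_three : (cycle 5).CliqueFree 3 := by
  unfold CliqueFree
  decide

theorem cycle_five_not_colorable_two : ¬(cycle 5).Colorable 2 := by
  rintro ⟨c⟩
  have hmono : ∀ f : ZMod 5 → Fin 2, ∃ u v, (cycle 5).Adj u v ∧ f u = f v := by decide
  obtain ⟨u, v, huv, hc⟩ := hmono c
  exact c.valid huv hc

theorem exists_embedding_fin_monochromatic {β : Type*} [Fintype β] (c : β → Bool) {t : ℕ}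
    (hβ : 2 * t - 1 ≤ Fintype.card β) : ∃ b, ∃ f : Fin t ↪ β, ∀ i, c (f i) = b := by
  have hfalse :
      Fintype.card {x // c x = false} = Fintype.card β - Fintype.card {x // c x = true} := by
    simpa using Fintype.card_subtype_compl (fun x => c x = true)
  have htrue := Fintype.card_subtype_le (fun x => c x = true)
  obtain ⟨b, hb⟩ : ∃ b, t ≤ Fintype.card {x // c x = b} := by
    by_contra! h
    have := h true
    have := h false
    omega
  obtain ⟨f⟩ := Function.Embedding.nonempty_of_card_le (α := Fin t) (by simpa using hb)
  exact ⟨b, f.trans (Function.Embedding.subtype _), fun i => (f i).2⟩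

theorem copies_completeBipartiteGraph_lexProd {α β : Type*} {G : SimpleGraph α}
    (H : SimpleGraph β) {S : Set (α × β)} {u v : α} (huv : G.Adj u v) {t : ℕ}
    (f g : Fin t ↪ β) (hf : ∀ i, (u, f i) ∈ S) (hg : ∀ i, (v, g i) ∈ S) :
    Copies (lexProd G H) (completeBipartiteGraph (Fin t) (Fin t)) S := by
  have hinj : Function.Injective (Sum.elim (fun i => (u, f i)) (fun i => (v, g i))) :=
    (Prod.mk_right_injective u |>.comp f.injective).sumElim
      (Prod.mk_right_injective v |>.comp g.injective)
      (fun _ _ h => G.ne_of_adj huv (Prod.ext_iff.1 h).1)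
  refine ⟨⟨_, hinj⟩, ?_, ?_⟩
  · rintro (i | i) (j | j) hij <;> simp at hij
    exacts [Or.inl huv, Or.inl huv.symm]
  · rintro (i | i)
    exacts [hf i, hg i]

theorem vArrows2_lexProd_of_not_colorable {α β : Type*} {G : SimpleGraph α}
    (hG : ¬G.Colorable 2) (H : SimpleGraph β) [Fintype β] {t : ℕ}
    (hβ : 2 * t - 1 ≤ Fintype.card β) :
    VArrows2 (lexProd G H) (completeBipartiteGraph (Fin t) (Fin t))
      (completeBipartiteGraph (Fin t) (Fin t)) := by
  intro C
  choose m f hf using fun a => exists_embedding_fin_monochromatic (fun x => C (a, x)) hβ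
  obtain ⟨u, v, huv, hm⟩ : ∃ u v, G.Adj u v ∧ m u = m v := by
    by_contra! h
    exact hG (by simpa using (Coloring.mk m fun huv => h _ _ huv).colorable)
  have hcopy : Copies (lexProd G H) (completeBipartiteGraph (Fin t) (Fin t)) {p | C p = m u} :=
    copies_completeBipartiteGraph_lexProd H huv (f u) (f v) (hf u)
      (fun i => (hf v i).trans hm.symm)
  cases hb : m u <;> rw [hb] at hcopy
  exacts [Or.inr hcopy, Or.inl hcopy]

theorem Copies.comap_equiv {α α' β : Type*} {G : SimpleGraph α} {F : SimpleGraph β} {S : Set α}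
    (h : Copies G F S) (e : α' ≃ α) : Copies (G.comap e) F (e ⁻¹' S) := by
  obtain ⟨f, hadj, hmem⟩ := h
  exact ⟨f.trans e.symm.toEmbedding, fun a b hab => by simpa using hadj a b hab,
    fun a => by simpa using hmem a⟩

theorem VArrows2.comap_equiv {α α' β γ : Type*} {G : SimpleGraph α} {F₁ : SimpleGraph β}
    {F₂ : SimpleGraph γ} (h : VArrows2 G F₁ F₂) (e : α' ≃ α) :
    VArrows2 (G.comap e) F₁ F₂ := by
  intro C
  rcases h (C ∘ e.symm) with hc | hc
  · exact Or.inl (by simpa [Set.preimage] using hc.comap_equiv e)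
  · exact Or.inr (by simpa [Set.preimage] using hc.comap_equiv e)

theorem fv2_le_card {α β γ : Type*} [Fintype α] {G : SimpleGraph α} {F₁ : SimpleGraph β}
    {F₂ : SimpleGraph γ} {k : ℕ} (hk : G.CliqueFree k) (h : VArrows2 G F₁ F₂) :
    Fv2 F₁ F₂ k ≤ Fintype.card α := by
  let e := (Fintype.equivFin α).symm
  exact Nat.sInf_le ⟨G.comap e, hk.comap (Embedding.comap e.toEmbedding G).isContained,
    h.comap_equiv e⟩

theorem C5_blowup_arrows_Ktt_general (t : ℕ) :
    (lexProd (cycle 5) (⊥ : SimpleGraph (Fin (2 * t - 1)))).CliqueFree 3 ∧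
    VArrows2 (lexProd (cycle 5) (⊥ : SimpleGraph (Fin (2 * t - 1))))
      (completeBipartiteGraph (Fin t) (Fin t)) (completeBipartiteGraph (Fin t) (Fin t)) ∧
    Fv2 (completeBipartiteGraph (Fin t) (Fin t)) (completeBipartiteGraph (Fin t) (Fin t)) 3 ≤
      10 * t - 5 := by
  have hfree := cycle_five_cliqueFree_three.lexProd_bot (β := Fin (2 * t - 1))
  have harrows := vArrows2_lexProd_of_not_colorable cycle_five_not_colorable_two
    (⊥ : SimpleGraph (Fin (2 * t - 1))) (t := t) (by simp)
  refine ⟨hfree, harrows, (fv2_le_card hfree harrows).trans_eq ?_⟩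
  simp only [Fintype.card_prod, ZMod.card, Fintype.card_fin]
  omega

/-- For `t ≥ 1`, `C_5[E_{2t-1}]` is triangle-free and vertex-arrows
`(K_{t,t}, K_{t,t})`; hence `F_v(K_{t,t},K_{t,t};3) ≤ 10t − 5`. -/
theorem C5_blowup_arrows_Ktt (t : ℕ) (ht : 1 ≤ t) :
    (lexProd (cycle 5) (⊥ : SimpleGraph (Fin (2 * t - 1)))).CliqueFree 3 ∧
    VArrows2 (lexProd (cycle 5) (⊥ : SimpleGraph (Fin (2 * t - 1))))
      (completeBipartiteGraph (Fin t) (Fin t)) (completeBipartiteGraph (Fin t) (Fin t)) ∧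
    Fv2 (completeBipartiteGraph (Fin t) (Fin t)) (completeBipartiteGraph (Fin t) (Fin t)) 3 ≤
      10 * t - 5 :=
  C5_blowup_arrows_Ktt_general t
end

section
/- Every 2-coloring of the edges of K_{1,2,2} (the complete tripartite graph with parts of sizes 1,2,2) contains a copy of J_3 = P_3 in color 1 or a triangle in color 2. That is, K_{1,2,2} edge-arrows (J_3, K_3). -/
open SimpleGraph

/- Proof idea: a red graph without a red `P_3` is a matching, so the apex `p` of the wheel
`K_{1,2,2} = K_1 + C_4` has at most one red edge. Hence there are blue edges from `p` to both
ends `w₁, w₂` of one diagonal of the rim and to a vertex `u` of the other diagonal. The edges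
`u w₁` and `u w₂` cannot both be red, and a blue one closes a blue triangle with `p`. -/

section Copies

variable {W : Type*} (H : SimpleGraph W)

lemma copies_jgraph_three_of_adj {x y z : W} (hxy : H.Adj x y) (hxz : H.Adj x z) (hyz : y ≠ z) :
    Copies H (Jgraph 3) Set.univ := by
  refine ⟨⟨Sum.elim (fun _ : Fin 1 => x) ![y, z], ?_⟩, ?_, fun _ => trivial⟩
  · rintro (u | u) (v | v) h
    · exact congrArg Sum.inl (Subsingleton.elim (α := Fin 1) u v)
    · fin_cases v <;> simp_all
    · fin_cases u <;> simp_all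
    · fin_cases u <;> fin_cases v <;> simp_all
  · rintro (u | u) (v | v) ⟨hne, hright⟩
    · exact absurd (congrArg Sum.inl (Subsingleton.elim (α := Fin 1) u v)) hne
    · fin_cases v
      exacts [hxy, hxz]
    · fin_cases u
      exacts [hxy.symm, hxz.symm]
    · exact absurd ⟨rfl, rfl⟩ hright

lemma copies_kc_three_of_adj {x y z : W} (hxy : H.Adj x y) (hxz : H.Adj x z) (hyz : H.Adj y z) :
    Copies H (Kc 3) Set.univ := by
  refine ⟨⟨![x, y, z], ?_⟩, ?_, fun _ => trivial⟩
  · intro i j h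
    fin_cases i <;> fin_cases j <;> simp_all [hxy.ne, hxz.ne, hyz.ne, hxy.ne.symm, hxz.ne.symm,
      hyz.ne.symm]
  · intro i j hij
    fin_cases i <;> fin_cases j <;> simp at hij ⊢
    all_goals first | assumption | exact hxy.symm | exact hxz.symm | exact hyz.symm

lemma eq_of_adj_of_adj_of_not_copies_jgraph_three (hH : ¬Copies H (Jgraph 3) Set.univ)
    {x y z : W} (hxy : H.Adj x y) (hxz : H.Adj x z) : y = z := by
  by_contra hyz
  exact hH (copies_jgraph_three_of_adj H hxy hxz hyz)

end Copies

section Wheel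

variable {W : Type*} {G R : SimpleGraph W}

lemma copies_kc_three_sdiff_of_fan (hR : ¬Copies R (Jgraph 3) Set.univ) {p u w₁ w₂ : W}
    (hpu : (G \ R).Adj p u) (hpw₁ : (G \ R).Adj p w₁) (hpw₂ : (G \ R).Adj p w₂)
    (huw₁ : G.Adj u w₁) (huw₂ : G.Adj u w₂) (hw : w₁ ≠ w₂) :
    Copies (G \ R) (Kc 3) Set.univ := by
  by_cases hred : R.Adj u w₁
  · have hblue : (G \ R).Adj u w₂ :=
      ⟨huw₂, fun h => hw (eq_of_adj_of_adj_of_not_copies_jgraph_three R hR hred h)⟩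
    exact copies_kc_three_of_adj _ hpu hpw₂ hblue
  · exact copies_kc_three_of_adj _ hpu hpw₁ ⟨huw₁, hred⟩

theorem copies_jgraph_three_or_copies_kc_three_sdiff_of_wheel {p b b' c c' : W}
    (hpb : G.Adj p b) (hpb' : G.Adj p b') (hpc : G.Adj p c) (hpc' : G.Adj p c')
    (hbc : G.Adj b c) (hbc' : G.Adj b c') (hb'c : G.Adj b' c) (hb'c' : G.Adj b' c')
    (hb : b ≠ b') (hc : c ≠ c') :
    Copies R (Jgraph 3) Set.univ ∨ Copies (G \ R) (Kc 3) Set.univ := by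
  by_cases hR : Copies R (Jgraph 3) Set.univ
  · exact Or.inl hR
  right
  have uniq {x y : W} (hx : R.Adj p x) (hy : R.Adj p y) : x = y :=
    eq_of_adj_of_adj_of_not_copies_jgraph_three R hR hx hy
  have blue {x : W} (hx : G.Adj p x) (y : W) (hy : R.Adj p y) (hxy : x ≠ y) : (G \ R).Adj p x :=
    ⟨hx, fun h => hxy (uniq h hy)⟩
  by_cases hpb_red : R.Adj p b
  · exact copies_kc_three_sdiff_of_fan hR (blue hpb' b hpb_red hb.symm)
      (blue hpc b hpb_red hbc.ne.symm) (blue hpc' b hpb_red hbc'.ne.symm) hb'c hb'c' hc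
  by_cases hpb'_red : R.Adj p b'
  · exact copies_kc_three_sdiff_of_fan hR (blue hpb b' hpb'_red hb)
      (blue hpc b' hpb'_red hb'c.ne.symm) (blue hpc' b' hpb'_red hb'c'.ne.symm) hbc hbc' hc
  by_cases hpc_red : R.Adj p c
  · exact copies_kc_three_sdiff_of_fan hR (blue hpc' c hpc_red hc.symm) ⟨hpb, hpb_red⟩
      ⟨hpb', hpb'_red⟩ hbc'.symm hb'c'.symm hb
  · exact copies_kc_three_sdiff_of_fan hR ⟨hpc, hpc_red⟩ ⟨hpb, hpb_red⟩ ⟨hpb', hpb'_red⟩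
      hbc.symm hb'c.symm hb

end Wheel

/-- `K_{1,2,2} → (J_3, K_3)^e`. -/
theorem K122_edge_arrows :
    EArrows2 (completeMultipartiteGraph (fun i : Fin 3 => Fin (![1, 2, 2] i)))
      (Jgraph 3) (Kc 3) := by
  intro R _
  let v (i : Fin 3) (j : ℕ) (hj : j < ![1, 2, 2] i := by decide) :
      Σ i : Fin 3, Fin (![1, 2, 2] i) := ⟨i, j, hj⟩
  exact copies_jgraph_three_or_copies_kc_three_sdiff_of_wheel (p := v 0 0) (b := v 1 0)
    (b' := v 1 1) (c := v 2 0) (c' := v 2 1) (by decide) (by decide) (by decide) (by decide)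
    (by decide) (by decide) (by decide) (by decide) (by decide) (by decide)
end
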